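/- (Negativity contraction.) Let C ⊆ V and C' ⊆ V' be proper cones with bases B = C ∩ {v | ⟨e,v⟩ = 1} and B' = C' ∩ {v' | ⟨e',v'⟩ = 1}, and let T : V → V' be a linear base-preserving map (T(B) ⊆ B'). Then for every v ∈ V with ⟨e,v⟩ ≥ 0: N_{B'}(T v) ≤ N_B(v) · tanh(Δ(T)/4), where tanh(∞/4) := 1. -/

import Mathlib

noncomputable section

variable {V : Type*} [NormedAddCommGroup V] [InnerProductSpace ℝ V]

/-- A proper cone: closed, convex, closed under nonnegative scaling, pointed and solid. -/
def IsProperCone (C : Set V) : Prop :=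
  IsClosed C ∧ Convex ℝ C ∧ (∀ (r : ℝ), 0 ≤ r → ∀ x ∈ C, r • x ∈ C) ∧
    (C ∩ (-C) = {0}) ∧ (Submodule.span ℝ C = ⊤)

/-- `sup_C(a/b) := inf {λ : ℝ | λ • b - a ∈ C}`, as an extended real (`⊤` if no such `λ`). -/
def supRatio (C : Set V) (a b : V) : EReal :=
  sInf ((fun l : ℝ => (l : EReal)) '' {l : ℝ | l • b - a ∈ C})

/-- `inf_C(a/b) := sup {λ : ℝ | a - λ • b ∈ C}`. -/
def infRatio (C : Set V) (a b : V) : EReal :=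
  sSup ((fun l : ℝ => (l : EReal)) '' {l : ℝ | a - l • b ∈ C})

/-- Hilbert's projective metric `h_C(a,b) = ln (sup_C(a/b) * sup_C(b/a)) ∈ [0,∞]`. -/
def hilbertDist (C : Set V) (a b : V) : EReal :=
  if supRatio C a b = ⊤ ∨ supRatio C b a = ⊤ then ⊤
  else ((Real.log ((supRatio C a b).toReal * (supRatio C b a).toReal) : ℝ) : EReal)

/-- The oscillation `osc_C(a/b) = sup_C(a/b) - inf_C(a/b)`. -/
def oscRatio (C : Set V) (a b : V) : EReal :=
  supRatio C a b - infRatio C a b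

variable {V' : Type*} [NormedAddCommGroup V'] [InnerProductSpace ℝ V']

/-- The projective diameter `Δ(T)` of a cone-preserving linear map `T`. -/
def projDiam (C : Set V) (C' : Set V') (T : V →ₗ[ℝ] V') : EReal :=
  ⨆ (a : V) (_ : a ∈ C \ {0}) (b : V) (_ : b ∈ C \ {0}), hilbertDist C' (T a) (T b)

/-- `tanh(x/4)`, with the convention `tanh(⊤/4) = 1`. -/
def tanhQuarter (x : EReal) : ℝ :=
  if x = ⊤ then 1 else Real.tanh (x.toReal / 4)

/-- `tanh(x/2)`, with the convention `tanh(⊤/2) = 1`. -/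
def tanhHalf (x : EReal) : ℝ :=
  if x = ⊤ then 1 else Real.tanh (x.toReal / 2)

/-- The dual cone of `C` (identifying `V` with its dual via the inner product). -/
def dualConeSet (C : Set V) : Set V := {w : V | ∀ c ∈ C, 0 ≤ (inner ℝ w c : ℝ)}

/-- The base norm `‖v‖_B` induced by the cone `C` and the functional `⟨e, ·⟩`. -/
def baseNorm (C : Set V) (e : V) (v : V) : ℝ :=
  sInf {r : ℝ | ∃ cp ∈ C, ∃ cm ∈ C, v = cp - cm ∧ r = (inner ℝ e cp : ℝ) + (inner ℝ e cm : ℝ)}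

/-- The negativity `N_B(v)` induced by the cone `C` and the functional `⟨e, ·⟩`. -/
def negativity (C : Set V) (e : V) (v : V) : ℝ :=
  sInf {r : ℝ | ∃ cp ∈ C, ∃ cm ∈ C, v = cp - cm ∧ r = (inner ℝ e cm : ℝ)}

/-!
For every decomposition `v = c₊ - c₋` with `n = ⟨e, c₋⟩` it suffices to show
`N_{B'}(T v) ≤ n tanh(Δ(T)/4)` and take the infimum. Normalize `c₊ = p a`, `c₋ = n b` with
`a, b ∈ B`. Since `p - n = ⟨e, v⟩ ≥ 0`, `T v = n (T a - T b) + (p - n) T a` has negativity at most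
`n N_{B'}(T a - T b)`, so it remains to bound the negativity of a difference `x - y` of two points
of `B'`. With `β = sup(x/y)` and `μ = sup(y/x)`, both attained because `C'` is closed,
`x - y = s (μ x - y) - t (β y - x)` for `s = (β - 1)/(βμ - 1)` and `t = (μ - 1)/(βμ - 1)`, whence
`N(x - y) ≤ t (β - 1) = (β - 1)(μ - 1)/(βμ - 1)`. By AM–GM this is at most
`(√(βμ) - 1)/(√(βμ) + 1) = tanh(log(βμ)/4) = tanh(h(x, y)/4)`.
-/

open Set Filter Topology Real
open scoped RealInnerProductSpace

namespace IsProperCone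

variable {C : Set V}

theorem zero_mem (hC : IsProperCone C) : (0 : V) ∈ C :=
  (hC.2.2.2.1.symm ▸ mem_singleton (0 : V) : (0 : V) ∈ C ∩ -C).1

theorem smul_mem (hC : IsProperCone C) {r : ℝ} (hr : 0 ≤ r) {x : V} (hx : x ∈ C) : r • x ∈ C :=
  hC.2.2.1 r hr x hx

theorem add_mem (hC : IsProperCone C) {x y : V} (hx : x ∈ C) (hy : y ∈ C) : x + y ∈ C := by
  have hmid : (1 / 2 : ℝ) • x + (1 / 2 : ℝ) • y ∈ C :=
    hC.2.1 hx hy (by norm_num) (by norm_num) (by norm_num)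
  convert hC.smul_mem zero_le_two hmid using 1
  module

theorem exists_eq_sub (hC : IsProperCone C) (v : V) : ∃ cp ∈ C, ∃ cm ∈ C, v = cp - cm := by
  have hv : v ∈ Submodule.span ℝ C := hC.2.2.2.2 ▸ Submodule.mem_top
  induction hv using Submodule.span_induction with
  | mem c hc => exact ⟨c, hc, 0, hC.zero_mem, (sub_zero c).symm⟩
  | zero => exact ⟨0, hC.zero_mem, 0, hC.zero_mem, (sub_zero 0).symm⟩
  | add u w _ _ hu hw =>
    obtain ⟨cp, hcp, cm, hcm, rfl⟩ := hu
    obtain ⟨dp, hdp, dm, hdm, rfl⟩ := hw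
    exact ⟨cp + dp, hC.add_mem hcp hdp, cm + dm, hC.add_mem hcm hdm, by abel⟩
  | smul r u _ hu =>
    obtain ⟨cp, hcp, cm, hcm, rfl⟩ := hu
    rcases le_total 0 r with hr | hr
    · exact ⟨r • cp, hC.smul_mem hr hcp, r • cm, hC.smul_mem hr hcm, smul_sub r cp cm⟩
    · have hr' : 0 ≤ -r := neg_nonneg.mpr hr
      exact ⟨(-r) • cm, hC.smul_mem hr' hcm, (-r) • cp, hC.smul_mem hr' hcp, by module⟩

end IsProperCone

theorem inner_pos_of_mem_interior_dualConeSet {C : Set V} {e c : V}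
    (he : e ∈ interior (dualConeSet C)) (hc : c ∈ C) (hc0 : c ≠ 0) : 0 < ⟪e, c⟫ := by
  have hnear : ∀ᶠ t in 𝓝 (0 : ℝ), e - t • c ∈ interior (dualConeSet C) := by
    refine ContinuousAt.eventually_mem (by fun_prop) ?_
    simpa using isOpen_interior.mem_nhds he
  obtain ⟨t, ht, ht0⟩ := ((hnear.filter_mono nhdsWithin_le_nhds).and
    (self_mem_nhdsWithin : ∀ᶠ t in 𝓝[>] (0 : ℝ), t ∈ Ioi 0)).exists
  have hdual := interior_subset ht c hc
  rw [inner_sub_left, real_inner_smul_left, real_inner_self_eq_norm_sq] at hdual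
  have : 0 < t * ‖c‖ ^ 2 := mul_pos (mem_Ioi.mp ht0) (by positivity)
  linarith

section Negativity

variable {C : Set V} {e : V}

theorem negativity_le_inner (he : e ∈ dualConeSet C) {v cp cm : V} (hcp : cp ∈ C) (hcm : cm ∈ C)
    (hv : v = cp - cm) : negativity C e v ≤ ⟪e, cm⟫ :=
  csInf_le ⟨0, by rintro r ⟨-, -, c, hc, -, rfl⟩; exact he c hc⟩ ⟨cp, hcp, cm, hcm, hv, rfl⟩

theorem negativity_nonpos_of_mem (hC : IsProperCone C) (he : e ∈ dualConeSet C) {c : V}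
    (hc : c ∈ C) : negativity C e c ≤ 0 := by
  simpa using negativity_le_inner he hc hC.zero_mem (sub_zero c).symm

theorem le_negativity_mul (hC : IsProperCone C) (he : e ∈ dualConeSet C) {v : V} {r τ : ℝ}
    (h : ∀ cp ∈ C, ∀ cm ∈ C, v = cp - cm → r ≤ ⟪e, cm⟫ * τ) :
    r ≤ negativity C e v * τ := by
  obtain ⟨cp, hcp, cm, hcm, hv⟩ := hC.exists_eq_sub v
  rcases le_or_gt τ 0 with hτ | hτ
  · exact (h cp hcp cm hcm hv).trans
      (mul_le_mul_of_nonpos_right (negativity_le_inner he hcp hcm hv) hτ)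
  · rw [← div_le_iff₀ hτ]
    refine le_csInf ⟨_, cp, hcp, cm, hcm, hv, rfl⟩ ?_
    rintro _ ⟨cp, hcp, cm, hcm, hv, rfl⟩
    exact (div_le_iff₀ hτ).mpr (h cp hcp cm hcm hv)

theorem negativity_smul_add_le (hC : IsProperCone C) (he : e ∈ dualConeSet C) {n : ℝ}
    (hn : 0 ≤ n) (w : V) {c : V} (hc : c ∈ C) :
    negativity C e (n • w + c) ≤ n * negativity C e w := by
  rw [mul_comm]
  refine le_negativity_mul hC he fun wp hwp wm hwm hw => ?_
  rw [mul_comm, ← real_inner_smul_right]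
  exact negativity_le_inner he (hC.add_mem (hC.smul_mem hn hwp) hc) (hC.smul_mem hn hwm)
    (by rw [hw]; module)

end Negativity

theorem Real.tanh_le_tanh {x y : ℝ} (h : x ≤ y) : tanh x ≤ tanh y := by
  by_contra! hlt
  have := artanh_lt_artanh (neg_one_lt_tanh y) (tanh_lt_one x) hlt
  rw [artanh_tanh, artanh_tanh] at this
  linarith

theorem Real.tanh_eq_sq_exp (u : ℝ) : tanh u = (exp u ^ 2 - 1) / (exp u ^ 2 + 1) := by
  rw [tanh_eq, exp_neg]
  field_simp

theorem Real.mul_div_le_tanh_log_div_four {β μ : ℝ} (hβ : 1 ≤ β) (hμ : 1 ≤ μ) :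
    (β - 1) * (μ - 1) / (β * μ - 1) ≤ tanh (log (β * μ) / 4) := by
  have hβμ : 1 ≤ β * μ := one_le_mul_of_one_le_of_one_le hβ hμ
  rw [tanh_eq_sq_exp]
  generalize hq : exp (log (β * μ) / 4) = q
  have hq4 : q ^ 4 = β * μ := by
    rw [← hq, ← exp_nat_mul, Nat.cast_ofNat, mul_div_cancel₀ _ four_ne_zero,
      exp_log (by positivity)]
  have hq1 : 1 ≤ q := hq ▸ one_le_exp (div_nonneg (log_nonneg hβμ) zero_le_four)
  rcases hβμ.eq_or_lt with hβμ | hβμ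
  · rw [← hβμ, sub_self, div_zero]
    exact div_nonneg (by nlinarith) (by positivity)
  · have hamgm : 2 * q ^ 2 ≤ β + μ := by nlinarith [sq_nonneg (β - μ), sq_nonneg q]
    rw [div_le_div_iff₀ (by linarith) (by positivity)]
    nlinarith

theorem tanhQuarter_coe (s : ℝ) : tanhQuarter s = tanh (s / 4) := by
  rw [tanhQuarter, if_neg (EReal.coe_ne_top s), EReal.toReal_coe]

theorem tanhQuarter_le_tanhQuarter {x y : EReal} (hx : x ≠ ⊥) (h : x ≤ y) :
    tanhQuarter x ≤ tanhQuarter y := by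
  unfold tanhQuarter
  split_ifs with hxtop hytop hytop
  · rfl
  · exact absurd (top_le_iff.mp (hxtop ▸ h)) hytop
  · exact (tanh_lt_one _).le
  · exact tanh_le_tanh (by gcongr; exact EReal.toReal_le_toReal h hx hytop)

theorem hilbertDist_ne_bot (C : Set V) (a b : V) : hilbertDist C a b ≠ ⊥ := by
  unfold hilbertDist
  split_ifs <;> simp

section HilbertMetric

variable {C : Set V} {e x y : V}

theorem supRatio_eq_of_isLeast {a b : V} {β : ℝ} (h : IsLeast {l : ℝ | l • b - a ∈ C} β) :
    supRatio C a b = β :=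
  (EReal.coe_strictMono.monotone.map_isLeast h).isGLB.sInf_eq

theorem one_le_of_smul_sub_mem (he : e ∈ dualConeSet C) (hx1 : ⟪e, x⟫ = 1) (hy1 : ⟪e, y⟫ = 1)
    {l : ℝ} (hl : l • y - x ∈ C) : 1 ≤ l := by
  have := he _ hl
  rw [inner_sub_right, real_inner_smul_right, hx1, hy1] at this
  linarith

theorem exists_supRatio_eq (hC : IsClosed C) (he : e ∈ dualConeSet C) (hx1 : ⟪e, x⟫ = 1)
    (hy1 : ⟪e, y⟫ = 1) (htop : supRatio C x y ≠ ⊤) :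
    ∃ β : ℝ, 1 ≤ β ∧ β • y - x ∈ C ∧ supRatio C x y = β := by
  have hne : {l : ℝ | l • y - x ∈ C}.Nonempty := by
    by_contra h
    rw [not_nonempty_iff_eq_empty] at h
    exact htop (by rw [supRatio, h, image_empty]; exact sInf_empty)
  have hleast := (hC.preimage (by fun_prop)).isLeast_csInf hne
    ⟨1, fun _ hl => one_le_of_smul_sub_mem he hx1 hy1 hl⟩
  exact ⟨_, one_le_of_smul_sub_mem he hx1 hy1 hleast.1, hleast.1, supRatio_eq_of_isLeast hleast⟩

theorem negativity_sub_le_of_smul_sub_mem (hC : IsProperCone C) (he : e ∈ dualConeSet C)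
    (hx1 : ⟪e, x⟫ = 1) (hy1 : ⟪e, y⟫ = 1) {β μ : ℝ} (hβ : 1 ≤ β) (hμ : 1 ≤ μ)
    (hβy : β • y - x ∈ C) (hμx : μ • x - y ∈ C) :
    negativity C e (x - y) ≤ (β - 1) * (μ - 1) / (β * μ - 1) := by
  rcases hμ.eq_or_lt with rfl | hμ1
  -- here `x - y ∈ C`, and the bound is `0` (via `0 / 0 = 0` if also `β = 1`)
  · simpa using negativity_nonpos_of_mem hC he (by simpa using hμx)
  have hden : 0 < β * μ - 1 := by nlinarith
  have hdecomp : x - y = ((β - 1) / (β * μ - 1)) • (μ • x - y)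
      - ((μ - 1) / (β * μ - 1)) • (β • y - x) := by
    match_scalars <;> field_simp <;> ring
  calc negativity C e (x - y) ≤ ⟪e, ((μ - 1) / (β * μ - 1)) • (β • y - x)⟫ :=
        negativity_le_inner he (hC.smul_mem (by positivity) hμx)
          (hC.smul_mem (by positivity) hβy) hdecomp
    _ = (β - 1) * (μ - 1) / (β * μ - 1) := by
        rw [real_inner_smul_right, inner_sub_right, real_inner_smul_right, hx1, hy1]
        ring

theorem negativity_sub_le_tanhQuarter_hilbertDist (hC : IsProperCone C)
    (he : e ∈ dualConeSet C) (hx : x ∈ C) (hy : y ∈ C) (hx1 : ⟪e, x⟫ = 1) (hy1 : ⟪e, y⟫ = 1) :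
    negativity C e (x - y) ≤ tanhQuarter (hilbertDist C x y) := by
  by_cases htop : supRatio C x y = ⊤ ∨ supRatio C y x = ⊤
  · rw [hilbertDist, if_pos htop, tanhQuarter, if_pos rfl, ← hy1]
    exact negativity_le_inner he hx hy rfl
  obtain ⟨β, hβ, hβy, hβeq⟩ := exists_supRatio_eq hC.1 he hx1 hy1 (not_or.mp htop).1
  obtain ⟨μ, hμ, hμx, hμeq⟩ := exists_supRatio_eq hC.1 he hy1 hx1 (not_or.mp htop).2
  rw [hilbertDist, if_neg htop, hβeq, hμeq, EReal.toReal_coe, EReal.toReal_coe, tanhQuarter_coe]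
  exact (negativity_sub_le_of_smul_sub_mem hC he hx1 hy1 hβ hμ hβy hμx).trans
    (mul_div_le_tanh_log_div_four hβ hμ)

end HilbertMetric

section BasePreserving

variable {C : Set V} {C' : Set V'} {e : V} {e' : V'} {T : V →ₗ[ℝ] V'}

theorem inv_inner_smul_mem_base (hC : IsProperCone C) {c : V} (hc : c ∈ C) (hpos : 0 < ⟪e, c⟫) :
    ⟪e, c⟫⁻¹ • c ∈ C ∩ {v | ⟪e, v⟫ = 1} :=
  ⟨hC.smul_mem (inv_nonneg.mpr hpos.le) hc, show ⟪e, ⟪e, c⟫⁻¹ • c⟫ = 1 by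
    rw [real_inner_smul_right, inv_mul_cancel₀ hpos.ne']⟩

theorem map_mem_of_mapsTo_base (hC : IsProperCone C) (hC' : IsProperCone C')
    (he : e ∈ interior (dualConeSet C))
    (hT : MapsTo T (C ∩ {v | ⟪e, v⟫ = 1}) (C' ∩ {v | ⟪e', v⟫ = 1})) {c : V} (hc : c ∈ C) :
    T c ∈ C' := by
  rcases eq_or_ne c 0 with rfl | hc0
  · simpa using hC'.zero_mem
  have hpos := inner_pos_of_mem_interior_dualConeSet he hc hc0
  have := hC'.smul_mem hpos.le (hT (inv_inner_smul_mem_base hC hc hpos)).1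
  rwa [← map_smul, smul_inv_smul₀ hpos.ne'] at this

theorem hilbertDist_le_projDiam {a b : V} (ha : a ∈ C \ {0}) (hb : b ∈ C \ {0}) :
    hilbertDist C' (T a) (T b) ≤ projDiam C C' T :=
  le_iSup₂_of_le a ha (le_iSup₂_of_le b hb le_rfl)

theorem negativity_map_sub_le (hC : IsProperCone C) (hC' : IsProperCone C')
    (he : e ∈ interior (dualConeSet C)) (he' : e' ∈ dualConeSet C')
    (hT : MapsTo T (C ∩ {v | ⟪e, v⟫ = 1}) (C' ∩ {v | ⟪e', v⟫ = 1}))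
    {cp cm : V} (hcp : cp ∈ C) (hcm : cm ∈ C) (hle : ⟪e, cm⟫ ≤ ⟪e, cp⟫) :
    negativity C' e' (T (cp - cm)) ≤ ⟪e, cm⟫ * tanhQuarter (projDiam C C' T) := by
  rcases eq_or_ne cm 0 with rfl | hcm0
  · simpa using negativity_nonpos_of_mem hC' he' (map_mem_of_mapsTo_base hC hC' he hT hcp)
  have hn : 0 < ⟪e, cm⟫ := inner_pos_of_mem_interior_dualConeSet he hcm hcm0
  have hp : 0 < ⟪e, cp⟫ := hn.trans_le hle
  set a := ⟪e, cp⟫⁻¹ • cp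
  set b := ⟪e, cm⟫⁻¹ • cm
  have ha := inv_inner_smul_mem_base hC hcp hp
  have hb := inv_inner_smul_mem_base hC hcm hn
  obtain ⟨hTa, hTa1⟩ := hT ha
  obtain ⟨hTb, hTb1⟩ := hT hb
  have hsplit : T (cp - cm) = ⟪e, cm⟫ • (T a - T b) + (⟪e, cp⟫ - ⟪e, cm⟫) • T a := by
    have hTcp : T cp = ⟪e, cp⟫ • T a := by rw [← map_smul, smul_inv_smul₀ hp.ne']
    have hTcm : T cm = ⟪e, cm⟫ • T b := by rw [← map_smul, smul_inv_smul₀ hn.ne']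
    rw [map_sub, hTcp, hTcm]
    module
  have hne_zero : ∀ {c : V}, c ∈ C ∩ {v | ⟪e, v⟫ = 1} → c ∈ C \ {0} := fun hc =>
    ⟨hc.1, fun h0 => by simp [mem_singleton_iff.mp h0] at hc⟩
  calc negativity C' e' (T (cp - cm)) ≤ ⟪e, cm⟫ * negativity C' e' (T a - T b) :=
        hsplit ▸ negativity_smul_add_le hC' he' hn.le _ (hC'.smul_mem (sub_nonneg.mpr hle) hTa)
    _ ≤ ⟪e, cm⟫ * tanhQuarter (hilbertDist C' (T a) (T b)) := by
        gcongr
        exact negativity_sub_le_tanhQuarter_hilbertDist hC' he' hTa hTb hTa1 hTb1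
    _ ≤ ⟪e, cm⟫ * tanhQuarter (projDiam C C' T) := by
        gcongr
        exact tanhQuarter_le_tanhQuarter (hilbertDist_ne_bot _ _ _)
          (hilbertDist_le_projDiam (hne_zero ha) (hne_zero hb))

end BasePreserving

theorem negativity_contraction_general
    {V : Type*} [NormedAddCommGroup V] [InnerProductSpace ℝ V]
    {V' : Type*} [NormedAddCommGroup V'] [InnerProductSpace ℝ V']
    (C : Set V) (C' : Set V') (hC : IsProperCone C) (hC' : IsProperCone C')
    (e : V) (he : e ∈ interior (dualConeSet C))
    (e' : V') (he' : e' ∈ interior (dualConeSet C'))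
    (B : Set V) (hB : B = C ∩ {v : V | (inner ℝ e v : ℝ) = 1})
    (B' : Set V') (hB' : B' = C' ∩ {v : V' | (inner ℝ e' v : ℝ) = 1})
    (T : V →ₗ[ℝ] V') (hT : ∀ b ∈ B, T b ∈ B')
    (v : V) (hv : 0 ≤ (inner ℝ e v : ℝ)) :
    negativity C' e' (T v) ≤ negativity C e v * tanhQuarter (projDiam C C' T) := by
  subst hB hB'
  refine le_negativity_mul hC (interior_subset he) fun cp hcp cm hcm hdecomp => ?_
  subst hdecomp
  refine negativity_map_sub_le hC hC' he (interior_subset he') (fun _ hb => hT _ hb) hcp hcm ?_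
  rwa [inner_sub_right, sub_nonneg] at hv

/-- **Negativity contraction.** -/
theorem negativity_contraction
    {V : Type*} [NormedAddCommGroup V] [InnerProductSpace ℝ V] [FiniteDimensional ℝ V]
    {V' : Type*} [NormedAddCommGroup V'] [InnerProductSpace ℝ V'] [FiniteDimensional ℝ V']
    (C : Set V) (C' : Set V') (hC : IsProperCone C) (hC' : IsProperCone C')
    (e : V) (he : e ∈ interior (dualConeSet C))
    (e' : V') (he' : e' ∈ interior (dualConeSet C'))
    (B : Set V) (hB : B = C ∩ {v : V | (inner ℝ e v : ℝ) = 1})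
    (B' : Set V') (hB' : B' = C' ∩ {v : V' | (inner ℝ e' v : ℝ) = 1})
    (T : V →ₗ[ℝ] V') (hT : ∀ b ∈ B, T b ∈ B')
    (v : V) (hv : 0 ≤ (inner ℝ e v : ℝ)) :
    negativity C' e' (T v) ≤ negativity C e v * tanhQuarter (projDiam C C' T) :=
  negativity_contraction_general C C' hC hC' e he e' he' B hB B' hB' T hT v hv

end
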